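/- Let G = (V,E) be a directed mixed graph. If the directed edge α→β is in G, then α is a potential parent of β in the independence model I(G). -/

import Mathlib

/-!
Directed mixed graphs (DMGs) with μ-separation, following
Mogensen & Hansen, "Markov equivalence of marginalized local independence graphs".
-/

universe u

/-- A directed mixed graph on node set `V`: a set of directed edges (`dir a b`
meaning `a → b`) and a set of bidirected edges (`bi`, a symmetric relation since
bidirected edges are unordered pairs).  Loops are allowed. -/
structure DMG (V : Type u) where
  dir : V → V → Prop
  bi : V → V → Prop
  bi_symm : ∀ a b, bi a b → bi b a

namespace DMG

variable {V : Type u}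

/-- A single step of a walk: an edge instance together with the direction in
which it is traversed (this records, in particular, orientations of loops).
A directed edge has a tail at its source and a head at its target; a bidirected
edge has heads at both endpoints. -/
inductive Step (G : DMG V) : V → V → Type u
  | dirF : ∀ {a b : V}, G.dir a b → Step G a b
  | dirB : ∀ {a b : V}, G.dir b a → Step G a b
  | bid  : ∀ {a b : V}, G.bi a b → Step G a b

/-- Whether the step has a head (edge mark) at its start node. -/
def Step.headStart {G : DMG V} : ∀ {a b : V}, Step G a b → Bool
  | _, _, .dirF _ => false
  | _, _, .dirB _ => true
  | _, _, .bid _ => true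

/-- Whether the step has a head (edge mark) at its end node. -/
def Step.headEnd {G : DMG V} : ∀ {a b : V}, Step G a b → Bool
  | _, _, .dirF _ => true
  | _, _, .dirB _ => false
  | _, _, .bid _ => true

/-- The step traverses a bidirected edge. -/
def Step.IsBid {G : DMG V} {a b : V} : Step G a b → Prop
  | .bid _ => True
  | _ => False

/-- The step traverses a directed edge, forwards. -/
def Step.IsDirF {G : DMG V} {a b : V} : Step G a b → Prop
  | .dirF _ => True
  | _ => False

/-- The underlying edge of a step: a directed edge is the ordered pair
(tail, head); a bidirected edge is the unordered pair of its endpoints. -/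
def Step.edge {G : DMG V} : ∀ {a b : V}, Step G a b → (V × V) ⊕ (Sym2 V)
  | a, b, .dirF _ => Sum.inl (a, b)
  | a, b, .dirB _ => Sum.inl (b, a)
  | a, b, .bid _ => Sum.inr s(a, b)

/-- A walk in a DMG: an alternating sequence of nodes and edges, each edge
between its neighbouring nodes, with a chosen orientation of each edge
(in particular of each directed loop). -/
inductive Walk (G : DMG V) : V → V → Type u
  | nil (a : V) : Walk G a a
  | cons {a b c : V} (s : Step G a b) (w : Walk G b c) : Walk G a c

namespace Walk

variable {G : DMG V}

/-- A nontrivial walk contains at least one edge. -/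
def Nontrivial : ∀ {a b : V}, Walk G a b → Prop
  | _, _, .nil _ => False
  | _, _, .cons _ _ => True

/-- The list of nodes of a walk, in order (with multiplicity). -/
def nodes : ∀ {a b : V}, Walk G a b → List V
  | a, _, .nil _ => [a]
  | a, _, .cons _ w => a :: w.nodes

/-- The non-endpoint (internal) nodes of a walk, in order (with multiplicity). -/
def interior {a b : V} (w : Walk G a b) : List V :=
  (w.nodes.dropLast).drop 1

/-- The list of edges of a walk. -/
def edges : ∀ {a b : V}, Walk G a b → List ((V × V) ⊕ (Sym2 V))
  | _, _, .nil _ => []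
  | _, _, .cons s w => s.edge :: w.edges

/-- Whether the first edge of the walk has a head at the first node
(`false` for a trivial walk). -/
def firstHead : ∀ {a b : V}, Walk G a b → Bool
  | _, _, .nil _ => false
  | _, _, .cons s _ => s.headStart

/-- Whether the last edge of the walk has a head at the last node
(`false` for a trivial walk). -/
def lastHead : ∀ {a b : V}, Walk G a b → Bool
  | _, _, .nil _ => false
  | _, _, .cons s (.nil _) => s.headEnd
  | _, _, .cons _ (.cons t w) => lastHead (Walk.cons t w)

/-- Helper: conditions at all remaining internal node instances of a walk,
where `h` records whether the edge arriving at the current start node has a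
head there.  A node instance is a collider if both adjoining edges have a
head at it; a collider must lie in `Anc`, a noncollider must avoid `C`. -/
def openFrom (C Anc : Set V) : ∀ {a b : V}, Bool → Walk G a b → Prop
  | _, _, _, .nil _ => True
  | a, _, h, .cons s w =>
      (if h && s.headStart then a ∈ Anc else a ∉ C) ∧ openFrom C Anc s.headEnd w

/-- Helper: every remaining internal node instance which is a collider lies in `S`. -/
def collInFrom (S : Set V) : ∀ {a b : V}, Bool → Walk G a b → Prop
  | _, _, _, .nil _ => True
  | a, _, h, .cons s w =>
      ((h && s.headStart) = true → a ∈ S) ∧ collInFrom S s.headEnd w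

/-- Every collider (internal node instance with heads on both sides) of the
walk lies in `S`. -/
def CollidersIn (S : Set V) : ∀ {a b : V}, Walk G a b → Prop
  | _, _, .nil _ => True
  | _, _, .cons s w => collInFrom S s.headEnd w

/-- The walk has no colliders. -/
def NoColliders {a b : V} (w : Walk G a b) : Prop :=
  w.CollidersIn ∅

/-- Helper: every remaining internal node instance is a collider. -/
def allCollFrom : ∀ {a b : V}, Bool → Walk G a b → Prop
  | _, _, _, .nil _ => True
  | _, _, h, .cons s w => (h && s.headStart) = true ∧ allCollFrom s.headEnd w

/-- Every internal node instance of the walk is a collider (no noncolliders). -/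
def AllColliders : ∀ {a b : V}, Walk G a b → Prop
  | _, _, .nil _ => True
  | _, _, .cons s w => allCollFrom s.headEnd w

/-- Every edge of the walk is bidirected. -/
def AllBid : ∀ {a b : V}, Walk G a b → Prop
  | _, _, .nil _ => True
  | _, _, .cons s w => s.IsBid ∧ w.AllBid

/-- The walk consists of a directed first edge (pointing forwards) followed by
bidirected edges only (the form `α → β` or `α → γ₁ ↔ ⋯ ↔ γₙ ↔ β`). -/
def UniForm : ∀ {a b : V}, Walk G a b → Prop
  | _, _, .nil _ => False
  | _, _, .cons s w => s.IsDirF ∧ w.AllBid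

end Walk

/-- `a` is an ancestor of `b`: there is a (possibly trivial) directed path
from `a` to `b`. -/
def anc (G : DMG V) (a b : V) : Prop := Relation.ReflTransGen G.dir a b

/-- The set of ancestors of nodes of `C`. -/
def anSet (G : DMG V) (C : Set V) : Set V := {a | ∃ c ∈ C, G.anc a c}

/-- The walk is μ-connecting given `C`: it is nontrivial, its first node is not
in `C`, every collider lies in `An(C)`, no noncollider lies in `C`, and its
final edge has a head at the final node. -/
def Walk.MuConn {G : DMG V} (C : Set V) : ∀ {a b : V}, Walk G a b → Prop
  | _, _, .nil _ => False
  | a, _, .cons s w =>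
      a ∉ C ∧ Walk.openFrom C (G.anSet C) s.headEnd w ∧ (Walk.cons s w).lastHead = true

/-- `B` is μ-separated from `A` given `C` in `G`: there is no μ-connecting
walk from any node of `A` to any node of `B` given `C`. -/
def muSep (G : DMG V) (A B C : Set V) : Prop :=
  ∀ ⦃a b : V⦄, a ∈ A → b ∈ B → ∀ w : Walk G a b, ¬ w.MuConn C

/-- Two DMGs on the same node set are Markov equivalent: they induce the same
independence model via μ-separation, i.e. `I(G₁) = I(G₂)`. -/
def MarkovEq (G₁ G₂ : DMG V) : Prop :=
  ∀ A B C : Set V, muSep G₁ A B C ↔ muSep G₂ A B C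

/-- `b` is separable from `a` in `I(G)`: there is `C ⊆ V ∖ {a}` with
`⟨{a},{b} | C⟩ ∈ I(G)`. -/
def separable (G : DMG V) (a b : V) : Prop :=
  ∃ C : Set V, a ∉ C ∧ muSep G {a} {b} C

/-- `a ∈ u(b, I(G))`: `b` is inseparable from `a` in `I(G)`. -/
def inU (G : DMG V) (a b : V) : Prop := ¬ G.separable a b

/-- `G₁` is a subgraph of `G₂` (same node set, edge-set inclusion). -/
def Sub (G₁ G₂ : DMG V) : Prop :=
  (∀ a b, G₁.dir a b → G₂.dir a b) ∧ (∀ a b, G₁.bi a b → G₂.bi a b)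

/-- The DMG obtained by adding the directed edge `a → b`. -/
def addDir (G : DMG V) (a b : V) : DMG V where
  dir x y := G.dir x y ∨ (x = a ∧ y = b)
  bi := G.bi
  bi_symm := G.bi_symm

/-- The DMG obtained by adding the bidirected edge `a ↔ b`. -/
def addBi (G : DMG V) (a b : V) : DMG V where
  dir := G.dir
  bi x y := G.bi x y ∨ (x = a ∧ y = b) ∨ (x = b ∧ y = a)
  bi_symm x y h := by
    rcases h with h | h | h
    · exact Or.inl (G.bi_symm _ _ h)
    · exact Or.inr (Or.inr ⟨h.2, h.1⟩)
    · exact Or.inr (Or.inl ⟨h.2, h.1⟩)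

/-- The DMG obtained by removing the directed edge `a → b`. -/
def removeDir (G : DMG V) (a b : V) : DMG V where
  dir x y := G.dir x y ∧ ¬(x = a ∧ y = b)
  bi := G.bi
  bi_symm := G.bi_symm

/-- The DMG obtained by removing the bidirected edge `a ↔ b`. -/
def removeBi (G : DMG V) (a b : V) : DMG V where
  dir := G.dir
  bi x y := G.bi x y ∧ ¬((x = a ∧ y = b) ∨ (x = b ∧ y = a))
  bi_symm x y h := ⟨G.bi_symm _ _ h.1, fun hc => h.2 (by tauto)⟩

/-- The complete DMG: all directed and all bidirected edges present. -/
def IsComplete (G : DMG V) : Prop :=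
  (∀ a b, G.dir a b) ∧ (∀ a b, G.bi a b)

/-- A DMG is maximal if it is complete, or adding any (absent) edge changes the
induced independence model. -/
def IsMaximal (G : DMG V) : Prop :=
  G.IsComplete ∨
    ∀ a b : V, (¬ G.dir a b → ¬ MarkovEq (G.addDir a b) G) ∧
      (¬ G.bi a b → ¬ MarkovEq (G.addBi a b) G)

end DMG
namespace DMG

variable {V : Type u}

/-- An inducing path from `a` to `b`: a nontrivial path or cycle from `a` to
`b` with a head at `b`, with no noncolliders, and on which every node is an
ancestor of `a` or of `b`. -/
def IsInducingPath (G : DMG V) {a b : V} (w : Walk G a b) : Prop :=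
  w.Nontrivial ∧
  (w.nodes.Nodup ∨ (a = b ∧ w.nodes.dropLast.Nodup)) ∧
  w.lastHead = true ∧
  w.AllColliders ∧
  ∀ x ∈ w.nodes, G.anc x a ∨ G.anc x b

/-- A bidirected inducing path: an inducing path all of whose edges are bidirected. -/
def IsBidirectedIP (G : DMG V) {a b : V} (w : Walk G a b) : Prop :=
  G.IsInducingPath w ∧ w.AllBid

/-- A directed inducing path: an inducing path of the form `α → β` or
`α → γ₁ ↔ ⋯ ↔ γₙ ↔ β` with every `γᵢ` an ancestor of `β`. -/
def IsDirectedIP (G : DMG V) {a b : V} (w : Walk G a b) : Prop :=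
  G.IsInducingPath w ∧ w.UniForm ∧ ∀ x ∈ w.interior, G.anc x b

/-- There exists a nontrivial walk in `G` between `x` and `y` with no
colliders, all non-endpoint nodes in `M`, and with edge marks `hs` at `x`
(`true` = head) and `he` at `y`. -/
def ConnThrough (G : DMG V) (M : Set V) (x y : V) (hs he : Bool) : Prop :=
  ∃ w : Walk G x y, w.Nontrivial ∧ w.NoColliders ∧
    (∀ z ∈ w.interior, z ∈ M) ∧ w.firstHead = hs ∧ w.lastHead = he

/-- The latent projection `m(G, O)` of `G` on `O`: the DMG on node set `O`
having an edge (with given endpoint marks) between `α` and `β` if and only if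
`G` contains a nontrivial endpoint-identical walk between `α` and `β` with no
colliders and all non-endpoint nodes in `M = V ∖ O`. -/
def latentProj (G : DMG V) (O : Set V) : DMG {x : V // x ∈ O} where
  dir x y := ConnThrough G Oᶜ x.1 y.1 false true
  bi x y := ConnThrough G Oᶜ x.1 y.1 true true ∨ ConnThrough G Oᶜ y.1 x.1 true true
  bi_symm x y h := h.symm

/-- `x` is directedly collider-connected to `b`: there is a nontrivial walk
from `x` to `b` with a head at `b` on which every non-endpoint node is a
collider. -/
def dirCollConn (G : DMG V) (x b : V) : Prop :=
  ∃ w : Walk G x b, w.Nontrivial ∧ w.AllColliders ∧ w.lastHead = true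

/-- The set `D(a,b)` of nodes in `An({a,b})` directedly collider-connected to
`b`, except `a`. -/
def Dset (G : DMG V) (a b : V) : Set V :=
  {x | x ∈ G.anSet {a, b} ∧ G.dirCollConn x b} \ {a}

/-- `a` and `b` are potential siblings in the independence model `I(G)`. -/
def PotSib (G : DMG V) (a b : V) : Prop :=
  (G.inU b a ∧ G.inU a b) ∧
  (∀ (γ : V) (C : Set V), b ∈ C → muSep G {γ} {a} C → muSep G {γ} {b} C) ∧
  (∀ (γ : V) (C : Set V), a ∈ C → muSep G {γ} {b} C → muSep G {γ} {a} C)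

/-- `a` is a potential parent of `b` in the independence model `I(G)`. -/
def PotPar (G : DMG V) (a b : V) : Prop :=
  G.inU a b ∧
  (∀ (γ : V) (C : Set V), a ∉ C → muSep G {γ} {b} C → muSep G {γ} {a} C) ∧
  (∀ (γ δ : V) (C : Set V), a ∉ C → b ∈ C →
    muSep G {γ} {δ} C → muSep G {γ} {b} C ∨ muSep G {a} {δ} C) ∧
  (∀ (γ : V) (C : Set V), a ∉ C → muSep G {b} {γ} C → muSep G {b} {γ} (C ∪ {a}))

/-- The graph `N(I(G))`: directed edge `a → b` present iff `a` is a potential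
parent of `b` in `I(G)`, bidirected edge `a ↔ b` present iff `a` and `b` are
potential siblings in `I(G)` (potential siblinghood is symmetric). -/
def NGraph (G : DMG V) : DMG V where
  dir a b := G.PotPar a b
  bi a b := G.PotSib a b ∨ G.PotSib b a
  bi_symm _ _ h := h.symm

/-- A path is m-connecting given `C` if it is a path (no repeated nodes), no
noncollider on it is in `C` and every collider on it is in `An(C)`. -/
def Walk.MConn {G : DMG V} (C : Set V) : ∀ {a b : V}, Walk G a b → Prop
  | _, _, .nil _ => True
  | _, _, .cons s w =>
      (Walk.cons s w).nodes.Nodup ∧ Walk.openFrom C (G.anSet C) s.headEnd w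

/-- `A` and `B` are m-separated by `C`: there is no m-connecting path between
a node of `A` and a node of `B` given `C`. -/
def mSep (G : DMG V) (A B C : Set V) : Prop :=
  ∀ ⦃a b : V⦄, a ∈ A → b ∈ B →
    (∀ w : Walk G a b, ¬ w.MConn C) ∧ (∀ w : Walk G b a, ¬ w.MConn C)

/-- Auxiliary directed-edge relation of the `B`-history version of `G`. -/
def histDir (G : DMG V) (B : Set V) : (V ⊕ {x : V // x ∈ B}) → (V ⊕ {x : V // x ∈ B}) → Prop
  | .inl u, .inl v => G.dir u v
  | .inl u, .inr v => G.dir u v.1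
  | _, _ => False

/-- Auxiliary bidirected-edge relation of the `B`-history version of `G`. -/
def histBi (G : DMG V) (B : Set V) : (V ⊕ {x : V // x ∈ B}) → (V ⊕ {x : V // x ∈ B}) → Prop
  | .inl u, .inl v => G.bi u v
  | .inl u, .inr v => G.bi u v.1
  | .inr u, .inl v => G.bi u.1 v
  | .inr _, .inr _ => False

/-- The `B`-history version `G(B)` of `G`: node set `V ⊔ Bᵖ`, whose subgraph
on `V` is `G`, with additionally `α ↔ βᵖ` whenever `α ↔ β` in `G` and
`α → βᵖ` whenever `α → β` in `G` (for `α ∈ V`, `β ∈ B`). -/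
def hist (G : DMG V) (B : Set V) : DMG (V ⊕ {x : V // x ∈ B}) where
  dir := G.histDir B
  bi := G.histBi B
  bi_symm x y h := by
    cases x <;> cases y <;>
      simp only [histBi] at h ⊢ <;>
      first
        | exact G.bi_symm _ _ h
        | exact h

end DMG

/-!
The edge `a → b` is itself μ-connecting given any `C ∌ a`. A μ-connecting walk into `a` extends
along `a → b`, and, when `b ∈ C`, μ-connecting walks into `b` and out of `a` join through the
collider `b ← a`; this gives (p1)–(p3). For (p4), a walk from `b` that is μ-connecting given
`C ∪ {a}` but not given `C` has a last collider `c ∉ An(C)`, and then `c ∈ An(a)`. No node of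
the directed path `c → ⋯ → a → b` lies in `C`, so reversing it and following the walk from `c`
onwards gives a walk from `b` that is μ-connecting given `C`.
-/

namespace DMG

variable {V : Type u} {G : DMG V}

namespace Walk

/-- The mark at the last node of the edge arriving there, where a trivial walk arrives with
mark `h`. -/
def endHead : ∀ {a b : V}, Bool → Walk G a b → Bool
  | _, _, h, .nil _ => h
  | _, _, _, .cons s w => endHead s.headEnd w

def append : ∀ {a b c : V}, Walk G a b → Walk G b c → Walk G a c
  | _, _, _, .nil _, v => v
  | _, _, _, .cons s w, v => .cons s (w.append v)

@[simp]
lemma endHead_append : ∀ {a b c : V} (h : Bool) (w : Walk G a b) (v : Walk G b c),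
    (w.append v).endHead h = v.endHead (w.endHead h)
  | _, _, _, _, .nil _, _ => rfl
  | _, _, _, _, .cons s w, v => endHead_append s.headEnd w v

lemma endHead_false_eq_lastHead : ∀ {a b : V} (w : Walk G a b), w.endHead false = w.lastHead
  | _, _, .nil _ => rfl
  | _, _, .cons _ (.nil _) => rfl
  | _, _, .cons _ (.cons t w) => endHead_false_eq_lastHead (.cons t w)

@[simp]
lemma openFrom_append {C A : Set V} : ∀ {x y z : V} (h : Bool) (w : Walk G x y) (v : Walk G y z),
    (w.append v).openFrom C A h ↔ w.openFrom C A h ∧ v.openFrom C A (w.endHead h)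
  | _, _, _, _, .nil _, _ => by simp [append, openFrom, endHead]
  | _, _, _, _, .cons s w, v => by
      simp only [append, openFrom, endHead, openFrom_append s.headEnd w v, and_assoc]

lemma muConn_iff {C : Set V} {a b : V} (w : Walk G a b) :
    w.MuConn C ↔ w.openFrom C (G.anSet C) false ∧ w.endHead false = true := by
  cases w with
  | nil => simp [MuConn, openFrom, endHead]
  | cons s w => simp [MuConn, openFrom, ← endHead_false_eq_lastHead, endHead, and_assoc]

lemma MuConn.cons_dirB {C : Set V} {m e γ : V} {W : Walk G m γ} (hW : W.MuConn C)
    (hd : G.dir m e) (he : e ∉ C) : (Walk.cons (Step.dirB hd) W).MuConn C := by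
  rw [muConn_iff] at hW ⊢
  simpa [openFrom, endHead, Step.headStart, Step.headEnd, he] using hW

/-- The witness `c` is the last collider of the walk outside `An(C)`. -/
lemma openFrom_or_exists_muConn_suffix (C : Set V) (a : V) {γ : V} :
    ∀ {x : V} (h : Bool) (w : Walk G x γ),
      w.openFrom (C ∪ {a}) (G.anSet (C ∪ {a})) h → w.endHead h = true →
      w.openFrom C (G.anSet C) h ∨
        ∃ c, c ∉ G.anSet C ∧ G.anc c a ∧ ∃ v : Walk G c γ, v.MuConn C
  | _, _, .nil _, _, _ => Or.inl trivial
  | x, h, .cons t w, hop, hend => by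
    obtain ⟨hx, hw⟩ := hop
    rcases openFrom_or_exists_muConn_suffix C a t.headEnd w hw hend with hw' | hsuffix
    · by_cases hcoll : (h && t.headStart) = true
      · rw [if_pos hcoll] at hx
        by_cases hxC : x ∈ G.anSet C
        · exact Or.inl ⟨by rwa [if_pos hcoll], hw'⟩
        · obtain ⟨y, hy | rfl, hxy⟩ := hx
          · exact absurd ⟨y, hy, hxy⟩ hxC
          · have hxC' : x ∉ C := fun hx => hxC ⟨x, hx, .refl⟩
            have hlast : (cons t w).lastHead = true := by rwa [← endHead_false_eq_lastHead]
            exact Or.inr ⟨x, hxC, hxy, .cons t w, hxC', hw', hlast⟩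
      · rw [if_neg hcoll] at hx
        exact Or.inl ⟨by rw [if_neg hcoll]; exact fun hxC => hx (Or.inl hxC), hw'⟩
    · exact Or.inr hsuffix

lemma MuConn.elim_union_singleton {C : Set V} {a x γ : V} {w : Walk G x γ}
    (hw : w.MuConn (C ∪ {a})) :
    w.MuConn C ∨ ∃ c, c ∉ G.anSet C ∧ G.anc c a ∧ ∃ v : Walk G c γ, v.MuConn C := by
  rw [muConn_iff] at hw
  refine (openFrom_or_exists_muConn_suffix C a false w hw.1 hw.2).imp_left fun hC => ?_
  exact (muConn_iff w).2 ⟨hC, hw.2⟩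

end Walk

/-- Reversing a directed path out of `c ∉ An(C)` keeps every node outside `C`. -/
lemma exists_muConn_of_anc {C : Set V} {c γ : V} (hc : c ∉ G.anSet C) {v : Walk G c γ}
    (hv : v.MuConn C) {e : V} (hce : G.anc c e) : ∃ W : Walk G e γ, W.MuConn C := by
  induction hce with
  | refl => exact ⟨v, hv⟩
  | @tail m e hcm hme ih =>
    obtain ⟨W, hW⟩ := ih
    exact ⟨_, hW.cons_dirB hme fun heC => hc ⟨e, heC, hcm.tail hme⟩⟩

lemma muSep_singleton_iff {p q : V} {C : Set V} :
    G.muSep {p} {q} C ↔ ∀ w : Walk G p q, ¬ w.MuConn C :=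
  ⟨fun h w => h rfl rfl w, by rintro h x y rfl rfl; exact h⟩

variable {a b : V}

lemma inU_of_dir (h : G.dir a b) : G.inU a b := fun ⟨_, haC, hsep⟩ =>
  muSep_singleton_iff.mp hsep (.cons (.dirF h) (.nil b)) ⟨haC, trivial, rfl⟩

lemma muSep_parent_of_muSep_child (h : G.dir a b) {γ : V} {C : Set V} (haC : a ∉ C)
    (hsep : G.muSep {γ} {b} C) : G.muSep {γ} {a} C := by
  rw [muSep_singleton_iff] at hsep ⊢
  intro w hw
  rw [Walk.muConn_iff] at hw
  refine hsep (w.append (.cons (.dirF h) (.nil b))) ((Walk.muConn_iff _).2 ?_)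
  simp [Walk.openFrom, Walk.endHead, Step.headStart, Step.headEnd, hw, haC]

lemma muSep_child_or_muSep_parent_of_mem (h : G.dir a b) {γ δ : V} {C : Set V} (hbC : b ∈ C)
    (hsep : G.muSep {γ} {δ} C) : G.muSep {γ} {b} C ∨ G.muSep {a} {δ} C := by
  simp only [muSep_singleton_iff] at hsep ⊢
  by_contra! ⟨⟨w₁, hw₁⟩, ⟨w₂, hw₂⟩⟩
  rw [Walk.muConn_iff] at hw₁ hw₂
  refine hsep (w₁.append (.cons (.dirB h) w₂)) ((Walk.muConn_iff _).2 ?_)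
  have hb : b ∈ G.anSet C := ⟨b, hbC, .refl⟩
  simp [Walk.openFrom, Walk.endHead, Step.headStart, Step.headEnd, hw₁, hw₂, hb]

lemma muSep_child_union_parent (h : G.dir a b) {γ : V} {C : Set V}
    (hsep : G.muSep {b} {γ} C) : G.muSep {b} {γ} (C ∪ {a}) := by
  rw [muSep_singleton_iff] at hsep ⊢
  intro w hw
  rcases hw.elim_union_singleton with hC | ⟨c, hc, hca, v, hv⟩
  · exact hsep w hC
  · obtain ⟨W, hW⟩ := exists_muConn_of_anc hc hv (hca.tail h)
    exact hsep W hW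

end DMG

theorem stmt14_general {V : Type u} (G : DMG V) (a b : V) (h : G.dir a b) :
    G.PotPar a b :=
  ⟨G.inU_of_dir h,
    fun _ _ haC => G.muSep_parent_of_muSep_child h haC,
    fun _ _ _ _ hbC => G.muSep_child_or_muSep_parent_of_mem h hbC,
    fun _ _ _ => G.muSep_child_union_parent h⟩

/-- Proposition 15: if the directed edge `a → b` is in `G`,
then `a` is a potential parent of `b` in `I(G)`. -/
theorem stmt14 {V : Type u} [Fintype V] (G : DMG V) (a b : V) (h : G.dir a b) :
    G.PotPar a b :=
  stmt14_general G a b h
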